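/- In the centipede game with m = 2n decision nodes (n ≥ 1), every mixed-strategy Nash equilibrium (σ, τ) yields expected payoffs Eu₁(σ,τ) = 2 and Eu₂(σ,τ) = 1, the payoffs of the outcome where the game is stopped at the very first node. -/

import Mathlib

open Finset

/-- Player 1's payoff in the reduced normal form of the centipede game with
`m = 2n` decision nodes.  Strategy `a < n` means "stop at own `(a+1)`-th node";
`a = n` means "always continue". -/
noncomputable def u1 (n : ℕ) (a b : Fin (n + 1)) : ℝ :=
  if a ≤ b ∧ (a : ℕ) < n then 2 * ((a : ℕ) + 1)
  else if b < a then 2 * ((b : ℕ) + 1) - 1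
  else 2 * n + 2

/-- Player 2's payoff in the reduced normal form of the centipede game. -/
noncomputable def u2 (n : ℕ) (a b : Fin (n + 1)) : ℝ :=
  if a ≤ b ∧ (a : ℕ) < n then 2 * ((a : ℕ) + 1) - 1
  else if b < a then 2 * ((b : ℕ) + 1) + 2
  else 2 * n + 1

/-- A mixed strategy: a probability vector on `Fin (n+1)`. -/
def IsMixed {n : ℕ} (σ : Fin (n + 1) → ℝ) : Prop :=
  (∀ a, 0 ≤ σ a) ∧ ∑ a, σ a = 1

/-- Expected payoff under mixed strategies `σ` (player 1) and `τ` (player 2). -/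
noncomputable def Eu {n : ℕ} (u : Fin (n + 1) → Fin (n + 1) → ℝ)
    (σ τ : Fin (n + 1) → ℝ) : ℝ :=
  ∑ a, ∑ b, σ a * τ b * u a b

/-- `(σ, τ)` is a (mixed) Nash equilibrium. -/
def IsNash (n : ℕ) (σ τ : Fin (n + 1) → ℝ) : Prop :=
  IsMixed σ ∧ IsMixed τ ∧
    (∀ σ', IsMixed σ' → Eu (u1 n) σ' τ ≤ Eu (u1 n) σ τ) ∧
    (∀ τ', IsMixed τ' → Eu (u2 n) σ τ' ≤ Eu (u2 n) σ τ)

/-- The point mass on the pure strategy `a0`. -/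
noncomputable def delta {n : ℕ} (a0 : Fin (n + 1)) : Fin (n + 1) → ℝ :=
  fun a => if a = a0 then 1 else 0

/-! Let `A` be the latest node at which player 1 stops with positive probability. If `A > 0`,
player 2 never stops at or after `A`: against a player 1 who stops by `A`, stopping just before
`A` is strictly better. So player 2's latest stopping node `B` lies before `A`, and then player 1
strictly prefers stopping at `B` to stopping at `A`, a contradiction. Hence `A = 0`: player 1
stops at once, and the payoffs are `(2, 1)` whatever player 2 does. -/

section WeightedSums

variable {ι : Type*} [Fintype ι] {w f g : ι → ℝ}

theorem eq_of_sum_mul_eq_of_forall_le (hw0 : ∀ i, 0 ≤ w i) (hw1 : ∑ i, w i = 1) {M : ℝ}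
    (hf : ∀ i, f i ≤ M) (hsum : ∑ i, w i * f i = M) {i : ι} (hi : 0 < w i) : f i = M := by
  have hgap : ∑ j, w j * (M - f j) = 0 := by
    simp only [mul_sub, sum_sub_distrib, ← sum_mul, hw1, hsum, one_mul, sub_self]
  have hgap_nonneg : ∀ j ∈ univ, 0 ≤ w j * (M - f j) := fun j _ =>
    mul_nonneg (hw0 j) (sub_nonneg.mpr (hf j))
  have hi_gap := (sum_eq_zero_iff_of_nonneg hgap_nonneg).mp hgap i (mem_univ i)
  have := (mul_eq_zero.mp hi_gap).resolve_left hi.ne'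
  linarith

theorem sum_mul_lt_sum_mul_of_le_on_support (hw0 : ∀ i, 0 ≤ w i)
    (hle : ∀ i, 0 < w i → f i ≤ g i) {j : ι} (hj : 0 < w j) (hlt : f j < g j) :
    ∑ i, w i * f i < ∑ i, w i * g i := by
  refine sum_lt_sum (fun i _ => ?_) ⟨j, mem_univ j, mul_lt_mul_of_pos_left hlt hj⟩
  rcases (hw0 i).eq_or_lt with hi | hi
  · simp [← hi]
  · exact mul_le_mul_of_nonneg_left (hle i hi) hi.le

theorem exists_pos_forall_pos_le [LinearOrder ι] (hw1 : ∑ i, w i = 1) :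
    ∃ A, 0 < w A ∧ ∀ i, 0 < w i → i ≤ A := by
  obtain ⟨i, -, hi⟩ := exists_lt_of_sum_lt (s := univ) (f := 0) (g := w) (by simp [hw1])
  obtain ⟨A, hA, hmax⟩ := (univ.filter (0 < w ·)).exists_max_image id ⟨i, by simpa using hi⟩
  exact ⟨A, (mem_filter.mp hA).2, fun j hj => hmax j (by simpa using hj)⟩

end WeightedSums

section MixedStrategies

variable {n : ℕ}

theorem isMixed_delta (a0 : Fin (n + 1)) : IsMixed (delta a0) :=
  ⟨fun a => by unfold delta; split_ifs <;> norm_num, by simp [delta]⟩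

theorem IsMixed.eq_delta_of_pos_imp_eq {σ : Fin (n + 1) → ℝ} (hσ : IsMixed σ) {a0 : Fin (n + 1)}
    (h : ∀ a, 0 < σ a → a = a0) : σ = delta a0 := by
  have hzero : ∀ a, a ≠ a0 → σ a = 0 := fun a ha =>
    ((hσ.1 a).eq_or_lt.resolve_right (mt (h a) ha)).symm
  have hone : σ a0 = 1 := by
    rw [← hσ.2, sum_eq_single a0 (fun a _ => hzero a) (by simp)]
  funext a
  by_cases ha : a = a0
  · simp [delta, ha, hone]
  · simp [delta, ha, hzero a ha]

variable (u : Fin (n + 1) → Fin (n + 1) → ℝ) (σ τ : Fin (n + 1) → ℝ)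

theorem Eu_eq_sum_row : Eu u σ τ = ∑ a, σ a * ∑ b, τ b * u a b := by
  simp only [Eu, mul_sum, mul_assoc]

theorem Eu_eq_sum_col : Eu u σ τ = ∑ b, τ b * ∑ a, σ a * u a b := by
  rw [Eu, sum_comm]
  simp only [mul_sum]
  exact sum_congr rfl fun b _ => sum_congr rfl fun a _ => by ring

theorem Eu_delta_left (a0 : Fin (n + 1)) : Eu u (delta a0) τ = ∑ b, τ b * u a0 b := by
  simp [Eu_eq_sum_row, delta]

theorem Eu_delta_right (b0 : Fin (n + 1)) : Eu u σ (delta b0) = ∑ a, σ a * u a b0 := by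
  simp [Eu_eq_sum_col, delta]

end MixedStrategies

section Payoffs

variable {n : ℕ} {a b : Fin (n + 1)}

/- The outcome in which nobody stops fits the same formulas as stopping at the last node, so the
strategy "always continue" needs no separate case. -/
theorem u1_of_le (h : a ≤ b) : u1 n a b = 2 * (a : ℕ) + 2 := by
  have hb := b.is_lt
  rw [Fin.le_def] at h
  unfold u1
  split_ifs with h1 h2
  · ring
  · exact absurd (Fin.lt_def.mp h2) (by omega)
  · have : (a : ℕ) = n := by rw [Fin.le_def] at h1; omega
    rw [this]

theorem u1_of_lt (h : b < a) : u1 n a b = 2 * (b : ℕ) + 1 := by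
  rw [u1, if_neg (fun h1 => absurd h (not_lt.mpr h1.1)), if_pos h]
  ring

theorem u2_of_le (h : a ≤ b) : u2 n a b = 2 * (a : ℕ) + 1 := by
  have hb := b.is_lt
  rw [Fin.le_def] at h
  unfold u2
  split_ifs with h1 h2
  · ring
  · exact absurd (Fin.lt_def.mp h2) (by omega)
  · have : (a : ℕ) = n := by rw [Fin.le_def] at h1; omega
    rw [this]

theorem u2_of_lt (h : b < a) : u2 n a b = 2 * (b : ℕ) + 4 := by
  rw [u2, if_neg (fun h1 => absurd h (not_lt.mpr h1.1)), if_pos h]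
  ring

theorem u1_zero_left (n : ℕ) (b : Fin (n + 1)) : u1 n 0 b = 2 := by
  simp [u1_of_le (Fin.zero_le b)]

theorem u2_zero_left (n : ℕ) (b : Fin (n + 1)) : u2 n 0 b = 1 := by
  simp [u2_of_le (Fin.zero_le b)]

end Payoffs

namespace IsNash

variable {n : ℕ} {σ τ : Fin (n + 1) → ℝ}

theorem row_le_of_pos (h : IsNash n σ τ) {a : Fin (n + 1)} (ha : 0 < σ a) (a' : Fin (n + 1)) :
    ∑ b, τ b * u1 n a' b ≤ ∑ b, τ b * u1 n a b := by
  have hdev : ∀ a', ∑ b, τ b * u1 n a' b ≤ Eu (u1 n) σ τ := fun a' => by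
    simpa only [Eu_delta_left] using h.2.2.1 _ (isMixed_delta a')
  rw [eq_of_sum_mul_eq_of_forall_le h.1.1 h.1.2 hdev (Eu_eq_sum_row _ _ _).symm ha]
  exact hdev a'

theorem col_le_of_pos (h : IsNash n σ τ) {b : Fin (n + 1)} (hb : 0 < τ b) (b' : Fin (n + 1)) :
    ∑ a, σ a * u2 n a b' ≤ ∑ a, σ a * u2 n a b := by
  have hdev : ∀ b', ∑ a, σ a * u2 n a b' ≤ Eu (u2 n) σ τ := fun b' => by
    simpa only [Eu_delta_right] using h.2.2.2 _ (isMixed_delta b')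
  rw [eq_of_sum_mul_eq_of_forall_le h.2.1.1 h.2.1.2 hdev (Eu_eq_sum_col _ _ _).symm hb]
  exact hdev b'

theorem lt_of_pos_right (h : IsNash n σ τ) {A c : Fin (n + 1)} (hA : 0 < σ A)
    (hσA : ∀ a, 0 < σ a → a ≤ A) (hc : (c : ℕ) + 1 = A) {b : Fin (n + 1)} (hb : 0 < τ b) :
    b < A := by
  by_contra! hAb
  have hlt : u2 n A b < u2 n A c := by
    rw [u2_of_le hAb, u2_of_lt (Fin.lt_def.mpr (by omega)), ← hc]
    push_cast
    linarith
  have hle : ∀ a, 0 < σ a → u2 n a b ≤ u2 n a c := fun a ha => by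
    rcases (hσA a ha).lt_or_eq with haA | rfl
    · rw [u2_of_le (haA.le.trans hAb), u2_of_le (Fin.le_def.mpr (by omega))]
    · exact hlt.le
  exact (sum_mul_lt_sum_mul_of_le_on_support h.1.1 hle hA hlt).not_ge (h.col_le_of_pos hb c)

theorem not_pos_left_of_lt (h : IsNash n σ τ) {B : Fin (n + 1)} (hB : 0 < τ B)
    (hτB : ∀ b, 0 < τ b → b ≤ B) {A : Fin (n + 1)} (hBA : B < A) : ¬ 0 < σ A := by
  intro hA
  have hlt : u1 n A B < u1 n B B := by
    rw [u1_of_lt hBA, u1_of_le le_rfl]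
    linarith
  have hle : ∀ b, 0 < τ b → u1 n A b ≤ u1 n B b := fun b hb => by
    rcases (hτB b hb).lt_or_eq with hbB | rfl
    · rw [u1_of_lt (hbB.trans hBA), u1_of_lt hbB]
    · exact hlt.le
  exact (sum_mul_lt_sum_mul_of_le_on_support h.2.1.1 hle hB hlt).not_ge (h.row_le_of_pos hA B)

theorem eq_zero_of_pos_left (h : IsNash n σ τ) {a : Fin (n + 1)} (ha : 0 < σ a) : a = 0 := by
  obtain ⟨A, hA, hσA⟩ := exists_pos_forall_pos_le h.1.2
  suffices hA0 : A = 0 from le_antisymm (hA0 ▸ hσA a ha) (Fin.zero_le a)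
  by_contra hA0
  have hA1 : 1 ≤ (A : ℕ) := Nat.one_le_iff_ne_zero.mpr (Fin.val_ne_iff.mpr hA0)
  obtain ⟨B, hB, hτB⟩ := exists_pos_forall_pos_le h.2.1.2
  have hBA : B < A := h.lt_of_pos_right (c := ⟨A - 1, by omega⟩) hA hσA (Nat.sub_add_cancel hA1) hB
  exact h.not_pos_left_of_lt hB hτB hBA hA

end IsNash

theorem nash_payoffs_general (n : ℕ)
    (σ τ : Fin (n + 1) → ℝ) (h : IsNash n σ τ) :
    Eu (u1 n) σ τ = 2 ∧ Eu (u2 n) σ τ = 1 := by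
  obtain rfl : σ = delta 0 := h.1.eq_delta_of_pos_imp_eq fun a => h.eq_zero_of_pos_left
  simp only [Eu_delta_left, u1_zero_left, u2_zero_left, ← sum_mul, h.2.1.2, one_mul, and_self]

/-- Every mixed-strategy Nash equilibrium `(σ, τ)` of the
centipede game with `m = 2n` nodes (`n ≥ 1`) yields the payoffs of
stopping at the very first node: `Eu₁(σ,τ) = 2` and `Eu₂(σ,τ) = 1`. -/
theorem nash_payoffs (n : ℕ) (hn : 1 ≤ n)
    (σ τ : Fin (n + 1) → ℝ) (h : IsNash n σ τ) :
    Eu (u1 n) σ τ = 2 ∧ Eu (u2 n) σ τ = 1 :=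
  nash_payoffs_general n σ τ h
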